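/- arXiv:2302.03921 — 2 statements merged into one kernel-verified Lean document; each statement's English description precedes it below -/
import Mathlib

section
/- Under the hypotheses of the previous statement (E_{(s,a)∼d₁^{π₁}}[D_TV(p₁(·|s,a), p₂(·|s,a))] ≤ ε_m and E_{s∼d₁^{π₁}}[D_TV(π₁(·|s), π₂(·|s))] ≤ ε_π), the expected discounted returns satisfy |J_{M₁}(π₁) − J_{M₂}(π₂)| ≤ (R/(1−γ)²)(2γ ε_m + 2 ε_π), where R bounds the absolute value of the reward. -/
open scoped BigOperators

/-- Probability of being in each state at time `t` under initial distribution `μ`,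
dynamics `p`, and policy `π`. -/
noncomputable def stateProb {S A : Type*} [Fintype S] [Fintype A]
    (μ : S → ℝ) (p : S → A → S → ℝ) (π : S → A → ℝ) : ℕ → S → ℝ
  | 0 => μ
  | t + 1 => fun s => ∑ s₀ : S, ∑ a₀ : A, stateProb μ p π t s₀ * π s₀ a₀ * p s₀ a₀ s

/-- Discounted state distribution `d^π(s) = (1-γ) ∑_{t≥0} γ^t P(s_t = s)`. -/
noncomputable def dState {S A : Type*} [Fintype S] [Fintype A]
    (γ : ℝ) (μ : S → ℝ) (p : S → A → S → ℝ) (π : S → A → ℝ) (s : S) : ℝ :=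
  (1 - γ) * ∑' t : ℕ, γ ^ t * stateProb μ p π t s

/-- Discounted state-action distribution `d^π(s,a) = π(a|s) d^π(s)`. -/
noncomputable def dSA {S A : Type*} [Fintype S] [Fintype A]
    (γ : ℝ) (μ : S → ℝ) (p : S → A → S → ℝ) (π : S → A → ℝ) (s : S) (a : A) : ℝ :=
  π s a * dState γ μ p π s

/-- Total variation distance between distributions on a finite set. -/
noncomputable def DTV {X : Type*} [Fintype X] (p q : X → ℝ) : ℝ :=
  (1 / 2) * ∑ x, |p x - q x|

/-- Expected discounted return `J_M(π) = (1/(1-γ)) E_{(s,a)∼d^π}[r(s,a)]`. -/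
noncomputable def J {S A : Type*} [Fintype S] [Fintype A]
    (γ : ℝ) (μ : S → ℝ) (p : S → A → S → ℝ) (π : S → A → ℝ) (r : S → A → ℝ) : ℝ :=
  (1 / (1 - γ)) * ∑ s, ∑ a, dSA γ μ p π s a * r s a

/-- A probability distribution on a finite set. -/
def IsProb {X : Type*} [Fintype X] (p : X → ℝ) : Prop :=
  (∀ x, 0 ≤ p x) ∧ ∑ x, p x = 1

section Aux
variable {S A : Type*} [Fintype S] [Fintype A]
  {μ : S → ℝ} {p : S → A → S → ℝ} {π : S → A → ℝ}

lemma stateProb_nonneg (hμ : IsProb μ) (hp : ∀ s a, IsProb (p s a))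
    (hπ : ∀ s, IsProb (π s)) : ∀ t s, 0 ≤ stateProb μ p π t s
  | 0, s => hμ.1 s
  | (t+1), s => by
    refine Finset.sum_nonneg fun s₀ _ => Finset.sum_nonneg fun a _ => ?_
    exact mul_nonneg (mul_nonneg (stateProb_nonneg hμ hp hπ t s₀) ((hπ s₀).1 a)) ((hp s₀ a).1 s)

lemma stateProb_sum (hμ : IsProb μ) (hp : ∀ s a, IsProb (p s a))
    (hπ : ∀ s, IsProb (π s)) : ∀ t, ∑ s, stateProb μ p π t s = 1
  | 0 => hμ.2
  | (t+1) => by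
    show (∑ s, ∑ s₀ : S, ∑ a₀ : A, stateProb μ p π t s₀ * π s₀ a₀ * p s₀ a₀ s) = 1
    rw [Finset.sum_comm]
    have : ∀ s₀ : S, (∑ s, ∑ a₀ : A, stateProb μ p π t s₀ * π s₀ a₀ * p s₀ a₀ s)
        = stateProb μ p π t s₀ := by
      intro s₀
      rw [Finset.sum_comm]
      have : ∀ a₀ : A, (∑ s, stateProb μ p π t s₀ * π s₀ a₀ * p s₀ a₀ s)
          = stateProb μ p π t s₀ * π s₀ a₀ := by
        intro a₀; rw [← Finset.mul_sum, (hp s₀ a₀).2, mul_one]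
      simp_rw [this, ← Finset.mul_sum, (hπ s₀).2, mul_one]
    simp_rw [this]
    exact stateProb_sum hμ hp hπ t

lemma stateProb_le_one (hμ : IsProb μ) (hp : ∀ s a, IsProb (p s a))
    (hπ : ∀ s, IsProb (π s)) (t : ℕ) (s : S) : stateProb μ p π t s ≤ 1 := by
  rw [← stateProb_sum hμ hp hπ t]
  exact Finset.single_le_sum (fun s' _ => stateProb_nonneg hμ hp hπ t s') (Finset.mem_univ s)

lemma sum_abs_eq_two_DTV {X : Type*} [Fintype X] (p q : X → ℝ) :
    ∑ x, |p x - q x| = 2 * DTV p q := by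
  rw [DTV]; ring

lemma DTV_nonneg {X : Type*} [Fintype X] (p q : X → ℝ) : 0 ≤ DTV p q := by
  have : 0 ≤ ∑ x, |p x - q x| := Finset.sum_nonneg fun x _ => abs_nonneg _
  rw [DTV]; linarith

lemma DTV_le_one {X : Type*} [Fintype X] {p q : X → ℝ} (hp : IsProb p) (hq : IsProb q) :
    DTV p q ≤ 1 := by
  have h : ∑ x, |p x - q x| ≤ ∑ x, (p x + q x) :=
    Finset.sum_le_sum fun x _ => (abs_sub _ _).trans (by
      rw [abs_of_nonneg (hp.1 x), abs_of_nonneg (hq.1 x)])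
  rw [Finset.sum_add_distrib, hp.2, hq.2] at h
  rw [DTV]; linarith

/-- reorder a triple sum `∑ s ∑ s₀ ∑ a w s₀ a * v s₀ a s`. -/
lemma sum3_reorder (w : S → A → ℝ) (v : S → A → S → ℝ) :
    (∑ s : S, ∑ s₀ : S, ∑ a : A, w s₀ a * v s₀ a s)
      = ∑ s₀ : S, ∑ a : A, w s₀ a * ∑ s : S, v s₀ a s := by
  rw [Finset.sum_comm]
  refine Finset.sum_congr rfl fun s₀ _ => ?_
  rw [Finset.sum_comm]
  exact Finset.sum_congr rfl fun a _ => by rw [Finset.mul_sum]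

/-- exchange of summation over `k < t < N`. -/
lemma sum_range_range_eq (N : ℕ) (F : ℕ → ℕ → ℝ) :
    (∑ t ∈ Finset.range N, ∑ k ∈ Finset.range t, F t k)
      = ∑ k ∈ Finset.range N, ∑ t ∈ Finset.Ico (k+1) N, F t k := by
  have := Finset.sum_Ico_Ico_comm' 0 N (fun k t => F t k)
  simpa [Nat.Ico_zero_eq_range] using this.symm

end Aux

/-- Performance difference bound between two MDPs differing in dynamics and policies. -/
theorem performance_difference_bound {S A : Type*} [Fintype S] [Fintype A]
    (γ : ℝ) (hγ0 : 0 ≤ γ) (hγ1 : γ < 1)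
    (μ : S → ℝ) (hμ : IsProb μ)
    (p₁ p₂ : S → A → S → ℝ) (hp₁ : ∀ s a, IsProb (p₁ s a)) (hp₂ : ∀ s a, IsProb (p₂ s a))
    (π₁ π₂ : S → A → ℝ) (hπ₁ : ∀ s, IsProb (π₁ s)) (hπ₂ : ∀ s, IsProb (π₂ s))
    (r : S → A → ℝ) (R : ℝ) (hr : ∀ s a, |r s a| ≤ R)
    (εm επ : ℝ)
    (hm : ∑ s : S, ∑ a : A, dSA γ μ p₁ π₁ s a * DTV (p₁ s a) (p₂ s a) ≤ εm)
    (hπ : ∑ s : S, dState γ μ p₁ π₁ s * DTV (π₁ s) (π₂ s) ≤ επ) :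
    |J γ μ p₁ π₁ r - J γ μ p₂ π₂ r| ≤
      R / (1 - γ) ^ 2 * (2 * γ * εm + 2 * επ) := by
  have h1γ : (0:ℝ) < 1 - γ := by linarith
  -- nonemptiness and R ≥ 0
  have hS : Nonempty S := by
    by_contra h
    rw [not_nonempty_iff] at h
    have := hμ.2
    simp [Finset.univ_eq_empty] at this
  have hA : Nonempty A := by
    by_contra h
    rw [not_nonempty_iff] at h
    have := (hπ₁ (Classical.arbitrary S)).2
    simp [Finset.univ_eq_empty] at this
  have hR : 0 ≤ R := le_trans (abs_nonneg _) (hr (Classical.arbitrary S) (Classical.arbitrary A))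
  set f := stateProb μ p₁ π₁ with hf_def
  set g := stateProb μ p₂ π₂ with hg_def
  have hf0 : ∀ t s, 0 ≤ f t s := stateProb_nonneg hμ hp₁ hπ₁
  have hg0 : ∀ t s, 0 ≤ g t s := stateProb_nonneg hμ hp₂ hπ₂
  have hf1 : ∀ t, ∑ s, f t s = 1 := stateProb_sum hμ hp₁ hπ₁
  have hg1 : ∀ t, ∑ s, g t s = 1 := stateProb_sum hμ hp₂ hπ₂
  have hfle : ∀ t s, f t s ≤ 1 := stateProb_le_one hμ hp₁ hπ₁
  have hgle : ∀ t s, g t s ≤ 1 := stateProb_le_one hμ hp₂ hπ₂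
  -- generic summability
  have hsum : ∀ (x : ℕ → ℝ) (C : ℝ), (∀ t, 0 ≤ x t) → (∀ t, x t ≤ C) →
      Summable (fun t => γ ^ t * x t) := by
    intro x C h0 hC
    refine Summable.of_nonneg_of_le (fun t => mul_nonneg (pow_nonneg hγ0 t) (h0 t))
      (fun t => ?_) ((summable_geometric_of_lt_one hγ0 hγ1).mul_right C)
    exact mul_le_mul_of_nonneg_left (hC t) (pow_nonneg hγ0 t)
  set Δ := fun t => ∑ s, |f t s - g t s| with hΔ_def
  set eπ := fun t => ∑ s, f t s * DTV (π₁ s) (π₂ s) with heπ_def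
  set em := fun t => ∑ s, ∑ a, f t s * π₁ s a * DTV (p₁ s a) (p₂ s a) with hem_def
  have hΔ0 : ∀ t, 0 ≤ Δ t := fun t => Finset.sum_nonneg fun s _ => abs_nonneg _
  have hΔ2 : ∀ t, Δ t ≤ 2 := by
    intro t
    have : ∀ s, |f t s - g t s| ≤ f t s + g t s := fun s =>
      (abs_sub _ _).trans (by rw [abs_of_nonneg (hf0 t s), abs_of_nonneg (hg0 t s)])
    calc Δ t ≤ ∑ s, (f t s + g t s) := Finset.sum_le_sum fun s _ => this s
      _ = 2 := by rw [Finset.sum_add_distrib, hf1, hg1]; norm_num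
  have heπ0 : ∀ t, 0 ≤ eπ t := fun t =>
    Finset.sum_nonneg fun s _ => mul_nonneg (hf0 t s) (DTV_nonneg _ _)
  have heπ1 : ∀ t, eπ t ≤ 1 := by
    intro t
    calc eπ t ≤ ∑ s, f t s * 1 :=
          Finset.sum_le_sum fun s _ => mul_le_mul_of_nonneg_left
            (DTV_le_one (hπ₁ s) (hπ₂ s)) (hf0 t s)
      _ = 1 := by simp [hf1]
  have hem0 : ∀ t, 0 ≤ em t := fun t =>
    Finset.sum_nonneg fun s _ => Finset.sum_nonneg fun a _ =>
      mul_nonneg (mul_nonneg (hf0 t s) ((hπ₁ s).1 a)) (DTV_nonneg _ _)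
  have hem1 : ∀ t, em t ≤ 1 := by
    intro t
    have : ∀ s, ∑ a, f t s * π₁ s a * DTV (p₁ s a) (p₂ s a) ≤ f t s := by
      intro s
      calc (∑ a, f t s * π₁ s a * DTV (p₁ s a) (p₂ s a))
          ≤ ∑ a, f t s * π₁ s a * 1 := Finset.sum_le_sum fun a _ =>
            mul_le_mul_of_nonneg_left (DTV_le_one (hp₁ s a) (hp₂ s a))
              (mul_nonneg (hf0 t s) ((hπ₁ s).1 a))
        _ = f t s := by simp_rw [mul_one, ← Finset.mul_sum, (hπ₁ s).2, mul_one]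
    calc em t ≤ ∑ s, f t s := Finset.sum_le_sum fun s _ => this s
      _ = 1 := hf1 t
  -- one-step recursion
  have hrec : ∀ t, Δ (t+1) ≤ Δ t + 2 * eπ t + 2 * em t := by
    intro t
    have hdiff : ∀ s, f (t+1) s - g (t+1) s
        = ∑ s₀ : S, ∑ a : A,
          (f t s₀ * π₁ s₀ a * p₁ s₀ a s - g t s₀ * π₂ s₀ a * p₂ s₀ a s) := by
      intro s
      show (∑ s₀ : S, ∑ a : A, f t s₀ * π₁ s₀ a * p₁ s₀ a s)
          - (∑ s₀ : S, ∑ a : A, g t s₀ * π₂ s₀ a * p₂ s₀ a s) = _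
      rw [← Finset.sum_sub_distrib]
      exact Finset.sum_congr rfl fun s₀ _ => by rw [← Finset.sum_sub_distrib]
    have hpt : ∀ s s₀ a,
        |f t s₀ * π₁ s₀ a * p₁ s₀ a s - g t s₀ * π₂ s₀ a * p₂ s₀ a s|
          ≤ (|f t s₀ - g t s₀| * π₂ s₀ a) * p₂ s₀ a s
            + (f t s₀ * |π₁ s₀ a - π₂ s₀ a|) * p₂ s₀ a s
            + (f t s₀ * π₁ s₀ a) * |p₁ s₀ a s - p₂ s₀ a s| := by
      intro s s₀ a
      have hid : f t s₀ * π₁ s₀ a * p₁ s₀ a s - g t s₀ * π₂ s₀ a * p₂ s₀ a s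
          = (f t s₀ - g t s₀) * π₂ s₀ a * p₂ s₀ a s
            + f t s₀ * (π₁ s₀ a - π₂ s₀ a) * p₂ s₀ a s
            + f t s₀ * π₁ s₀ a * (p₁ s₀ a s - p₂ s₀ a s) := by ring
      rw [hid]
      refine (abs_add_three _ _ _).trans ?_
      rw [abs_mul, abs_mul, abs_mul, abs_mul, abs_mul, abs_mul,
        abs_of_nonneg ((hπ₂ s₀).1 a), abs_of_nonneg ((hp₂ s₀ a).1 s),
        abs_of_nonneg (hf0 t s₀), abs_of_nonneg ((hπ₁ s₀).1 a)]
    calc Δ (t+1) = ∑ s, |∑ s₀ : S, ∑ a : A,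
          (f t s₀ * π₁ s₀ a * p₁ s₀ a s - g t s₀ * π₂ s₀ a * p₂ s₀ a s)| := by
          simp_rw [hΔ_def, hdiff]
      _ ≤ ∑ s, ∑ s₀ : S, ∑ a : A,
          |f t s₀ * π₁ s₀ a * p₁ s₀ a s - g t s₀ * π₂ s₀ a * p₂ s₀ a s| := by
          refine Finset.sum_le_sum fun s _ => ?_
          refine (Finset.abs_sum_le_sum_abs _ _).trans ?_
          exact Finset.sum_le_sum fun s₀ _ => Finset.abs_sum_le_sum_abs _ _
      _ ≤ ∑ s, ∑ s₀ : S, ∑ a : A,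
          ((|f t s₀ - g t s₀| * π₂ s₀ a) * p₂ s₀ a s
            + (f t s₀ * |π₁ s₀ a - π₂ s₀ a|) * p₂ s₀ a s
            + (f t s₀ * π₁ s₀ a) * |p₁ s₀ a s - p₂ s₀ a s|) := by
          refine Finset.sum_le_sum fun s _ => Finset.sum_le_sum fun s₀ _ =>
            Finset.sum_le_sum fun a _ => hpt s s₀ a
      _ = (∑ s, ∑ s₀ : S, ∑ a : A, (|f t s₀ - g t s₀| * π₂ s₀ a) * p₂ s₀ a s)
          + (∑ s, ∑ s₀ : S, ∑ a : A, (f t s₀ * |π₁ s₀ a - π₂ s₀ a|) * p₂ s₀ a s)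
          + (∑ s, ∑ s₀ : S, ∑ a : A, (f t s₀ * π₁ s₀ a) * |p₁ s₀ a s - p₂ s₀ a s|) := by
          simp_rw [Finset.sum_add_distrib]
      _ = Δ t + 2 * eπ t + 2 * em t := by
          congr 1
          · congr 1
            · rw [sum3_reorder (fun s₀ a => |f t s₀ - g t s₀| * π₂ s₀ a) p₂]
              have : ∀ s₀ : S, (∑ a : A, |f t s₀ - g t s₀| * π₂ s₀ a * ∑ s, p₂ s₀ a s)
                  = |f t s₀ - g t s₀| := by
                intro s₀
                simp_rw [fun a => (hp₂ s₀ a).2, mul_one, ← Finset.mul_sum, (hπ₂ s₀).2, mul_one]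
              simp_rw [this]
              rfl
            · rw [sum3_reorder (fun s₀ a => f t s₀ * |π₁ s₀ a - π₂ s₀ a|) p₂]
              have : ∀ s₀ : S, (∑ a : A, f t s₀ * |π₁ s₀ a - π₂ s₀ a| * ∑ s, p₂ s₀ a s)
                  = f t s₀ * (2 * DTV (π₁ s₀) (π₂ s₀)) := by
                intro s₀
                simp_rw [fun a => (hp₂ s₀ a).2, mul_one, ← Finset.mul_sum,
                  sum_abs_eq_two_DTV]
              simp_rw [this, heπ_def, Finset.mul_sum]
              refine Finset.sum_congr rfl fun s _ => by ring
          · rw [sum3_reorder (fun s₀ a => f t s₀ * π₁ s₀ a)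
              (fun s₀ a s => |p₁ s₀ a s - p₂ s₀ a s|)]
            simp_rw [sum_abs_eq_two_DTV, hem_def, Finset.mul_sum]
            exact Finset.sum_congr rfl fun s _ => Finset.sum_congr rfl fun a _ => by ring
  -- cumulative bound
  have hcum : ∀ t, Δ t ≤ 2 * ∑ k ∈ Finset.range t, (eπ k + em k) := by
    intro t
    induction t with
    | zero => simp [hΔ_def, hf_def, hg_def, stateProb]
    | succ t ih =>
      calc Δ (t+1) ≤ Δ t + 2 * eπ t + 2 * em t := hrec t
        _ ≤ 2 * ∑ k ∈ Finset.range t, (eπ k + em k) + 2 * eπ t + 2 * em t := by linarith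
        _ = 2 * ∑ k ∈ Finset.range (t+1), (eπ k + em k) := by
            rw [Finset.sum_range_succ]; ring
  have hSΔ : Summable (fun t => γ ^ t * Δ t) := hsum Δ 2 hΔ0 hΔ2
  have hSeπ : Summable (fun t => γ ^ t * eπ t) := hsum eπ 1 heπ0 heπ1
  have hSem : Summable (fun t => γ ^ t * em t) := hsum em 1 hem0 hem1
  set Tπ := ∑' t, γ ^ t * eπ t with hTπ_def
  set Tm := ∑' t, γ ^ t * em t with hTm_def
  have hTπ0 : 0 ≤ Tπ := tsum_nonneg fun t => mul_nonneg (pow_nonneg hγ0 t) (heπ0 t)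
  have hTm0 : 0 ≤ Tm := tsum_nonneg fun t => mul_nonneg (pow_nonneg hγ0 t) (hem0 t)
  -- geometric tail bound
  have hgeo : ∀ k N : ℕ, ∑ t ∈ Finset.Ico (k+1) N, γ ^ t ≤ γ ^ (k+1) * (1-γ)⁻¹ := by
    intro k N
    rw [Finset.sum_Ico_eq_sum_range]
    simp_rw [pow_add γ (k+1)]
    rw [← Finset.mul_sum]
    refine mul_le_mul_of_nonneg_left ?_ (pow_nonneg hγ0 _)
    have h := Summable.sum_le_tsum (Finset.range (N - (k+1))) (fun j _ => pow_nonneg hγ0 j)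
      (summable_geometric_of_lt_one hγ0 hγ1)
    rwa [tsum_geometric_of_lt_one hγ0 hγ1] at h
  -- key tsum bound on Δ
  have hkey : ∑' t, γ ^ t * Δ t ≤ γ / (1-γ) * (2 * (Tπ + Tm)) := by
    apply Real.tsum_le_of_sum_range_le (fun t => mul_nonneg (pow_nonneg hγ0 t) (hΔ0 t))
    intro N
    have step1 : ∑ t ∈ Finset.range N, γ ^ t * Δ t
        ≤ ∑ t ∈ Finset.range N, ∑ k ∈ Finset.range t, γ ^ t * (2 * (eπ k + em k)) := by
      refine Finset.sum_le_sum fun t _ => ?_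
      calc γ ^ t * Δ t ≤ γ ^ t * (2 * ∑ k ∈ Finset.range t, (eπ k + em k)) :=
            mul_le_mul_of_nonneg_left (hcum t) (pow_nonneg hγ0 t)
        _ = ∑ k ∈ Finset.range t, γ ^ t * (2 * (eπ k + em k)) := by
            rw [Finset.mul_sum, Finset.mul_sum]
    rw [sum_range_range_eq N (fun t k => γ ^ t * (2 * (eπ k + em k)))] at step1
    have step2 : ∀ k, ∑ t ∈ Finset.Ico (k+1) N, γ ^ t * (2 * (eπ k + em k))
        ≤ γ ^ (k+1) * (1-γ)⁻¹ * (2 * (eπ k + em k)) := by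
      intro k
      rw [← Finset.sum_mul]
      exact mul_le_mul_of_nonneg_right (hgeo k N)
        (by have := heπ0 k; have := hem0 k; linarith)
    have step3 : ∑ k ∈ Finset.range N, γ ^ (k+1) * (1-γ)⁻¹ * (2 * (eπ k + em k))
        = γ / (1-γ) * (2 * ∑ k ∈ Finset.range N, (γ ^ k * eπ k + γ ^ k * em k)) := by
      rw [Finset.mul_sum, Finset.mul_sum]
      refine Finset.sum_congr rfl fun k _ => by rw [pow_succ]; field_simp
    have step4 : ∑ k ∈ Finset.range N, (γ ^ k * eπ k + γ ^ k * em k) ≤ Tπ + Tm := by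
      rw [Finset.sum_add_distrib]
      exact add_le_add
        (Summable.sum_le_tsum _ (fun k _ => mul_nonneg (pow_nonneg hγ0 k) (heπ0 k)) hSeπ)
        (Summable.sum_le_tsum _ (fun k _ => mul_nonneg (pow_nonneg hγ0 k) (hem0 k)) hSem)
    calc ∑ t ∈ Finset.range N, γ ^ t * Δ t
        ≤ ∑ k ∈ Finset.range N, ∑ t ∈ Finset.Ico (k+1) N, γ ^ t * (2 * (eπ k + em k)) := step1
      _ ≤ ∑ k ∈ Finset.range N, γ ^ (k+1) * (1-γ)⁻¹ * (2 * (eπ k + em k)) :=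
          Finset.sum_le_sum fun k _ => step2 k
      _ = γ / (1-γ) * (2 * ∑ k ∈ Finset.range N, (γ ^ k * eπ k + γ ^ k * em k)) := step3
      _ ≤ γ / (1-γ) * (2 * (Tπ + Tm)) := by
          refine mul_le_mul_of_nonneg_left (by linarith [step4]) ?_
          positivity
  -- tsum identity for expectations under d₁
  have hgen : ∀ (D : S → ℝ), (∀ s, 0 ≤ D s) → (∀ s, D s ≤ 1) →
      ∑ s, dState γ μ p₁ π₁ s * D s = (1-γ) * ∑' t, γ ^ t * ∑ s, f t s * D s := by
    intro D hD0 hD1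
    have hsm : ∀ s, Summable fun t => γ ^ t * (f t s * D s) := fun s =>
      hsum _ 1 (fun t => mul_nonneg (hf0 t s) (hD0 s))
        (fun t => mul_le_one₀ (hfle t s) (hD0 s) (hD1 s))
    calc ∑ s, dState γ μ p₁ π₁ s * D s
        = ∑ s, ∑' t, (1-γ) * (γ ^ t * (f t s * D s)) := by
          refine Finset.sum_congr rfl fun s _ => ?_
          have h1 : ∀ t : ℕ, (1-γ) * (γ ^ t * (f t s * D s))
              = (γ ^ t * f t s) * (D s * (1-γ)) := fun t => by ring
          simp only [dState]
          rw [tsum_congr h1, tsum_mul_right]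
          ring
      _ = ∑' t, ∑ s, (1-γ) * (γ ^ t * (f t s * D s)) :=
          (Summable.tsum_finsetSum fun s _ => (hsm s).mul_left _).symm
      _ = (1-γ) * ∑' t, γ ^ t * ∑ s, f t s * D s := by
          rw [← tsum_mul_left]
          refine tsum_congr fun t => ?_
          rw [← Finset.mul_sum, ← Finset.mul_sum]
  -- identity for eπ
  have hSigpi : ∑ s, dState γ μ p₁ π₁ s * DTV (π₁ s) (π₂ s) = (1-γ) * Tπ := by
    rw [hgen (fun s => DTV (π₁ s) (π₂ s)) (fun s => DTV_nonneg _ _)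
      (fun s => DTV_le_one (hπ₁ s) (hπ₂ s))]
  -- identity for em
  set W := fun s => ∑ a, π₁ s a * DTV (p₁ s a) (p₂ s a) with hW_def
  have hW0 : ∀ s, 0 ≤ W s := fun s =>
    Finset.sum_nonneg fun a _ => mul_nonneg ((hπ₁ s).1 a) (DTV_nonneg _ _)
  have hW1 : ∀ s, W s ≤ 1 := by
    intro s
    calc W s ≤ ∑ a, π₁ s a * 1 := Finset.sum_le_sum fun a _ =>
          mul_le_mul_of_nonneg_left (DTV_le_one (hp₁ s a) (hp₂ s a)) ((hπ₁ s).1 a)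
      _ = 1 := by simp [(hπ₁ s).2]
  have hSigm : ∑ s, ∑ a, dSA γ μ p₁ π₁ s a * DTV (p₁ s a) (p₂ s a) = (1-γ) * Tm := by
    have h1 : ∑ s, ∑ a, dSA γ μ p₁ π₁ s a * DTV (p₁ s a) (p₂ s a)
        = ∑ s, dState γ μ p₁ π₁ s * W s := by
      refine Finset.sum_congr rfl fun s _ => ?_
      simp only [dSA, hW_def, Finset.mul_sum]
      exact Finset.sum_congr rfl fun a _ => by ring
    rw [h1, hgen W hW0 hW1]
    congr 1
    refine tsum_congr fun t => ?_
    congr 1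
    simp only [hW_def, hem_def, Finset.mul_sum]
    exact Finset.sum_congr rfl fun s _ => Finset.sum_congr rfl fun a _ => by ring
  -- bound on discounted-state-distribution difference
  have hdd : ∑ s, |dState γ μ p₁ π₁ s - dState γ μ p₂ π₂ s| ≤ (1-γ) * ∑' t, γ ^ t * Δ t := by
    have habs : ∀ s, ∀ t : ℕ, |γ ^ t * f t s - γ ^ t * g t s| = γ ^ t * |f t s - g t s| := by
      intro s t
      rw [← mul_sub, abs_mul, abs_of_nonneg (pow_nonneg hγ0 t)]
    have hSabs : ∀ s, Summable fun t => γ ^ t * |f t s - g t s| := fun s =>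
      hsum _ 2 (fun t => abs_nonneg _) (fun t => by
        have h1 : |f t s - g t s| ≤ f t s + g t s := (abs_sub _ _).trans
          (by rw [abs_of_nonneg (hf0 t s), abs_of_nonneg (hg0 t s)])
        have := hfle t s; have := hgle t s; linarith)
    have hper : ∀ s, |dState γ μ p₁ π₁ s - dState γ μ p₂ π₂ s|
        ≤ (1-γ) * ∑' t, γ ^ t * |f t s - g t s| := by
      intro s
      simp only [dState]
      rw [← mul_sub, abs_mul, abs_of_nonneg h1γ.le]
      refine mul_le_mul_of_nonneg_left ?_ h1γ.le
      have hfs : Summable fun t => γ ^ t * f t s :=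
        hsum _ 1 (fun t => hf0 t s) (fun t => hfle t s)
      have hgs : Summable fun t => γ ^ t * g t s :=
        hsum _ 1 (fun t => hg0 t s) (fun t => hgle t s)
      rw [← Summable.tsum_sub hfs hgs]
      have hnorm : Summable fun t => ‖γ ^ t * f t s - γ ^ t * g t s‖ := by
        simpa only [Real.norm_eq_abs, habs s] using hSabs s
      calc |∑' t, (γ ^ t * f t s - γ ^ t * g t s)|
          ≤ ∑' t, ‖γ ^ t * f t s - γ ^ t * g t s‖ := by
            rw [← Real.norm_eq_abs]; exact norm_tsum_le_tsum_norm hnorm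
        _ = ∑' t, γ ^ t * |f t s - g t s| :=
            tsum_congr fun t => by rw [Real.norm_eq_abs, habs s t]
    calc ∑ s, |dState γ μ p₁ π₁ s - dState γ μ p₂ π₂ s|
        ≤ ∑ s, (1-γ) * ∑' t, γ ^ t * |f t s - g t s| :=
          Finset.sum_le_sum fun s _ => hper s
      _ = (1-γ) * ∑' t, γ ^ t * Δ t := by
          rw [← Finset.mul_sum]
          congr 1
          rw [← Summable.tsum_finsetSum fun s _ => hSabs s]
          exact tsum_congr fun t => by rw [hΔ_def, Finset.mul_sum]
  -- nonnegativity of d₁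
  have hd10 : ∀ s, 0 ≤ dState γ μ p₁ π₁ s := by
    intro s
    simp only [dState]
    exact mul_nonneg h1γ.le (tsum_nonneg fun t => mul_nonneg (pow_nonneg hγ0 t) (hf0 t s))
  -- state-action difference bound
  have hsa : ∑ s, ∑ a, |dSA γ μ p₁ π₁ s a - dSA γ μ p₂ π₂ s a|
      ≤ 2 * ∑ s, dState γ μ p₁ π₁ s * DTV (π₁ s) (π₂ s)
        + ∑ s, |dState γ μ p₁ π₁ s - dState γ μ p₂ π₂ s| := by
    have hps : ∀ s, ∑ a, |dSA γ μ p₁ π₁ s a - dSA γ μ p₂ π₂ s a|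
        ≤ 2 * (dState γ μ p₁ π₁ s * DTV (π₁ s) (π₂ s))
          + |dState γ μ p₁ π₁ s - dState γ μ p₂ π₂ s| := by
      intro s
      have hpt : ∀ a, |dSA γ μ p₁ π₁ s a - dSA γ μ p₂ π₂ s a|
          ≤ dState γ μ p₁ π₁ s * |π₁ s a - π₂ s a|
            + π₂ s a * |dState γ μ p₁ π₁ s - dState γ μ p₂ π₂ s| := by
        intro a
        simp only [dSA]
        have hid : π₁ s a * dState γ μ p₁ π₁ s - π₂ s a * dState γ μ p₂ π₂ s
            = (π₁ s a - π₂ s a) * dState γ μ p₁ π₁ s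
              + π₂ s a * (dState γ μ p₁ π₁ s - dState γ μ p₂ π₂ s) := by ring
        rw [hid]
        refine (abs_add_le _ _).trans ?_
        rw [abs_mul, abs_mul, abs_of_nonneg (hd10 s), abs_of_nonneg ((hπ₂ s).1 a)]
        linarith [mul_comm (dState γ μ p₁ π₁ s) |π₁ s a - π₂ s a|]
      calc ∑ a, |dSA γ μ p₁ π₁ s a - dSA γ μ p₂ π₂ s a|
          ≤ ∑ a, (dState γ μ p₁ π₁ s * |π₁ s a - π₂ s a|
              + π₂ s a * |dState γ μ p₁ π₁ s - dState γ μ p₂ π₂ s|) :=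
            Finset.sum_le_sum fun a _ => hpt a
        _ = 2 * (dState γ μ p₁ π₁ s * DTV (π₁ s) (π₂ s))
            + |dState γ μ p₁ π₁ s - dState γ μ p₂ π₂ s| := by
            rw [Finset.sum_add_distrib, ← Finset.mul_sum, sum_abs_eq_two_DTV,
              ← Finset.sum_mul, (hπ₂ s).2, one_mul]
            ring
    calc ∑ s, ∑ a, |dSA γ μ p₁ π₁ s a - dSA γ μ p₂ π₂ s a|
        ≤ ∑ s, (2 * (dState γ μ p₁ π₁ s * DTV (π₁ s) (π₂ s))
            + |dState γ μ p₁ π₁ s - dState γ μ p₂ π₂ s|) :=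
          Finset.sum_le_sum fun s _ => hps s
      _ = _ := by rw [Finset.sum_add_distrib, ← Finset.mul_sum]
  -- J difference bound
  have hJ : |J γ μ p₁ π₁ r - J γ μ p₂ π₂ r|
      ≤ 1 / (1-γ) * R * ∑ s, ∑ a, |dSA γ μ p₁ π₁ s a - dSA γ μ p₂ π₂ s a| := by
    have hid : J γ μ p₁ π₁ r - J γ μ p₂ π₂ r
        = 1 / (1-γ) * ∑ s, ∑ a, (dSA γ μ p₁ π₁ s a - dSA γ μ p₂ π₂ s a) * r s a := by
      simp only [J]
      rw [← mul_sub, ← Finset.sum_sub_distrib]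
      congr 1
      refine Finset.sum_congr rfl fun s _ => ?_
      rw [← Finset.sum_sub_distrib]
      exact Finset.sum_congr rfl fun a _ => by ring
    rw [hid, abs_mul, abs_of_nonneg (by positivity : (0:ℝ) ≤ 1 / (1-γ)), mul_assoc]
    refine mul_le_mul_of_nonneg_left ?_ (by positivity)
    calc |∑ s, ∑ a, (dSA γ μ p₁ π₁ s a - dSA γ μ p₂ π₂ s a) * r s a|
        ≤ ∑ s, ∑ a, |(dSA γ μ p₁ π₁ s a - dSA γ μ p₂ π₂ s a) * r s a| := by
          refine (Finset.abs_sum_le_sum_abs _ _).trans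
            (Finset.sum_le_sum fun s _ => Finset.abs_sum_le_sum_abs _ _)
      _ ≤ ∑ s, ∑ a, R * |dSA γ μ p₁ π₁ s a - dSA γ μ p₂ π₂ s a| := by
          refine Finset.sum_le_sum fun s _ => Finset.sum_le_sum fun a _ => ?_
          rw [abs_mul, mul_comm]
          exact mul_le_mul_of_nonneg_right (hr s a) (abs_nonneg _)
      _ = R * ∑ s, ∑ a, |dSA γ μ p₁ π₁ s a - dSA γ μ p₂ π₂ s a| := by
          simp_rw [Finset.mul_sum]
  -- final combination
  have hTπε : (1-γ) * Tπ ≤ επ := by rw [← hSigpi]; exact hπ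
  have hTmε : (1-γ) * Tm ≤ εm := by rw [← hSigm]; exact hm
  have hΔd : ∑ s, |dState γ μ p₁ π₁ s - dState γ μ p₂ π₂ s| ≤ 2 * γ * (Tπ + Tm) := by
    refine hdd.trans ?_
    have h2 : (1-γ) * (γ / (1-γ) * (2 * (Tπ + Tm))) = 2 * γ * (Tπ + Tm) := by
      field_simp
    calc (1-γ) * ∑' t, γ ^ t * Δ t ≤ (1-γ) * (γ / (1-γ) * (2 * (Tπ + Tm))) :=
          mul_le_mul_of_nonneg_left hkey h1γ.le
      _ = 2 * γ * (Tπ + Tm) := h2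
  have htot : ∑ s, ∑ a, |dSA γ μ p₁ π₁ s a - dSA γ μ p₂ π₂ s a|
      ≤ 2 * Tπ + 2 * γ * Tm := by
    have := hsa
    rw [hSigpi] at this
    nlinarith [hΔd, mul_nonneg hγ0 hTπ0]
  have hfin : 1 / (1-γ) * R * (2 * Tπ + 2 * γ * Tm)
      ≤ R / (1-γ) ^ 2 * (2 * γ * εm + 2 * επ) := by
    have hTπu : Tπ ≤ επ / (1-γ) := by rw [le_div_iff₀ h1γ]; linarith [hTπε]
    have hTmu : Tm ≤ εm / (1-γ) := by rw [le_div_iff₀ h1γ]; linarith [hTmε]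
    have h1 : 2 * Tπ + 2 * γ * Tm ≤ 2 * (επ / (1-γ)) + 2 * γ * (εm / (1-γ)) := by
      have := mul_le_mul_of_nonneg_left hTmu (by linarith : (0:ℝ) ≤ 2 * γ)
      linarith
    have h2 : 1 / (1-γ) * R * (2 * (επ / (1-γ)) + 2 * γ * (εm / (1-γ)))
        = R / (1-γ) ^ 2 * (2 * γ * εm + 2 * επ) := by
      field_simp; ring
    calc 1 / (1-γ) * R * (2 * Tπ + 2 * γ * Tm)
        ≤ 1 / (1-γ) * R * (2 * (επ / (1-γ)) + 2 * γ * (εm / (1-γ))) :=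
          mul_le_mul_of_nonneg_left h1 (by positivity)
      _ = _ := h2
  calc |J γ μ p₁ π₁ r - J γ μ p₂ π₂ r|
      ≤ 1 / (1-γ) * R * ∑ s, ∑ a, |dSA γ μ p₁ π₁ s a - dSA γ μ p₂ π₂ s a| := hJ
    _ ≤ 1 / (1-γ) * R * (2 * Tπ + 2 * γ * Tm) :=
        mul_le_mul_of_nonneg_left htot (by positivity)
    _ ≤ R / (1-γ) ^ 2 * (2 * γ * εm + 2 * επ) := hfin
end

section
/- For discounted state-action distributions: under the assumptions E_{(s,a)∼d₁^{π₁}}[D_TV(p₁(·|s,a), p₂(·|s,a))] ≤ ε_m and E_{s∼d₁^{π₁}}[D_TV(π₁(·|s), π₂(·|s))] ≤ ε_π, one has the recursive inequality ∑_{s,a}|d₁^{π₁}(s,a) − d₂^{π₂}(s,a)| ≤ 2γε_m + 2ε_π + γ ∑_{s,a}|d₁^{π₁}(s,a) − d₂^{π₂}(s,a)|, obtained by splitting via the Bellman flow constraint and the triangle inequality. -/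
open scoped BigOperators

/-! Since `dᵢ(s,a) = πᵢ(a|s) dᵢ(s)`, adding and subtracting `π₂(a|s) d₁(s)` bounds
`∑ |d₁(s,a) - d₂(s,a)|` by `2 επ + ∑ |d₁(s) - d₂(s)|`. In `d₁(s) - d₂(s)` the Bellman flow
constraint cancels the `μ` terms and leaves `γ` times the difference of the pushforwards of `d₁(·,·)`
and `d₂(·,·)` through `p₁` and `p₂`; adding and subtracting `p₂ d₁` bounds its `ℓ¹` norm by
`2 εm + ∑ |d₁(s,a) - d₂(s,a)|`. -/

theorem abs_mul_sub_mul_le_of_nonneg {R : Type*} [CommRing R] [LinearOrder R]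
    [IsStrictOrderedRing R] {a b c d : R} (ha : 0 ≤ a) (hd : 0 ≤ d) :
    |b * a - d * c| ≤ |b - d| * a + d * |a - c| :=
  calc |b * a - d * c| = |(b - d) * a + d * (a - c)| := by ring_nf
    _ ≤ |(b - d) * a| + |d * (a - c)| := abs_add_le _ _
    _ = |b - d| * a + d * |a - c| := by rw [abs_mul, abs_mul, abs_of_nonneg ha, abs_of_nonneg hd]

section TotalVariation

variable {X Y : Type*} [Fintype X] [Fintype Y]

theorem sum_abs_mul_sub_mul_le {q₁ q₂ : Y → ℝ} {w₁ w₂ : ℝ} (hw₁ : 0 ≤ w₁) (hq₂ : IsProb q₂) :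
    ∑ y, |q₁ y * w₁ - q₂ y * w₂| ≤ 2 * (w₁ * DTV q₁ q₂) + |w₁ - w₂| :=
  calc ∑ y, |q₁ y * w₁ - q₂ y * w₂|
      ≤ ∑ y, (|q₁ y - q₂ y| * w₁ + q₂ y * |w₁ - w₂|) :=
        Finset.sum_le_sum fun y _ => abs_mul_sub_mul_le_of_nonneg hw₁ (hq₂.1 y)
    _ = 2 * (w₁ * DTV q₁ q₂) + |w₁ - w₂| := by
        rw [Finset.sum_add_distrib, ← Finset.sum_mul, ← Finset.sum_mul, hq₂.2, DTV]
        ring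

theorem sum_abs_sum_mul_sub_mul_le {q₁ q₂ : X → Y → ℝ} {w₁ w₂ : X → ℝ} (hw₁ : ∀ x, 0 ≤ w₁ x)
    (hq₂ : ∀ x, IsProb (q₂ x)) :
    ∑ y, |∑ x, (q₁ x y * w₁ x - q₂ x y * w₂ x)| ≤
      ∑ x, (2 * (w₁ x * DTV (q₁ x) (q₂ x)) + |w₁ x - w₂ x|) :=
  calc ∑ y, |∑ x, (q₁ x y * w₁ x - q₂ x y * w₂ x)|
      ≤ ∑ y, ∑ x, |q₁ x y * w₁ x - q₂ x y * w₂ x| :=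
        Finset.sum_le_sum fun _ _ => Finset.abs_sum_le_sum_abs _ _
    _ = ∑ x, ∑ y, |q₁ x y * w₁ x - q₂ x y * w₂ x| := Finset.sum_comm
    _ ≤ _ := Finset.sum_le_sum fun x _ => sum_abs_mul_sub_mul_le (hw₁ x) (hq₂ x)

end TotalVariation

section Occupancy

variable {S A : Type*} [Fintype S] [Fintype A] {γ : ℝ} {μ : S → ℝ} {p : S → A → S → ℝ}
  {π : S → A → ℝ}

theorem stateProb_isProb (hμ : IsProb μ) (hp : ∀ s a, IsProb (p s a)) (hπ : ∀ s, IsProb (π s))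
    (t : ℕ) : IsProb (stateProb μ p π t) := by
  induction t with
  | zero => exact hμ
  | succ t ih =>
    refine ⟨fun s => ?_, ?_⟩
    · exact Finset.sum_nonneg fun s₀ _ => Finset.sum_nonneg fun a₀ _ =>
        mul_nonneg (mul_nonneg (ih.1 s₀) ((hπ s₀).1 a₀)) ((hp s₀ a₀).1 s)
    · calc ∑ s, stateProb μ p π (t + 1) s
          = ∑ s₀, ∑ a₀, stateProb μ p π t s₀ * π s₀ a₀ * ∑ s, p s₀ a₀ s := by
            simp only [stateProb, Finset.mul_sum]
            rw [Finset.sum_comm]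
            exact Finset.sum_congr rfl fun s₀ _ => Finset.sum_comm
        _ = 1 := by simp only [(hp _ _).2, mul_one, ← Finset.mul_sum, (hπ _).2, ih.2]

theorem summable_pow_mul_stateProb (hγ0 : 0 ≤ γ) (hγ1 : γ < 1) (hμ : IsProb μ)
    (hp : ∀ s a, IsProb (p s a)) (hπ : ∀ s, IsProb (π s)) (s : S) :
    Summable fun t : ℕ => γ ^ t * stateProb μ p π t s := by
  have hP := stateProb_isProb hμ hp hπ
  refine (summable_geometric_of_lt_one hγ0 hγ1).of_nonneg_of_le
    (fun t => mul_nonneg (pow_nonneg hγ0 t) ((hP t).1 s)) fun t => ?_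
  have hle : stateProb μ p π t s ≤ 1 :=
    (hP t).2 ▸ Finset.single_le_sum (fun x _ => (hP t).1 x) (Finset.mem_univ s)
  simpa using mul_le_mul_of_nonneg_left hle (pow_nonneg hγ0 t)

theorem dState_nonneg (hγ0 : 0 ≤ γ) (hγ1 : γ < 1) (hμ : IsProb μ) (hp : ∀ s a, IsProb (p s a))
    (hπ : ∀ s, IsProb (π s)) (s : S) : 0 ≤ dState γ μ p π s :=
  mul_nonneg (by linarith) <| tsum_nonneg fun t =>
    mul_nonneg (pow_nonneg hγ0 t) ((stateProb_isProb hμ hp hπ t).1 s)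

theorem dSA_nonneg (hγ0 : 0 ≤ γ) (hγ1 : γ < 1) (hμ : IsProb μ) (hp : ∀ s a, IsProb (p s a))
    (hπ : ∀ s, IsProb (π s)) (s : S) (a : A) : 0 ≤ dSA γ μ p π s a :=
  mul_nonneg ((hπ s).1 a) (dState_nonneg hγ0 hγ1 hμ hp hπ s)

theorem dState_bellman_flow (hγ0 : 0 ≤ γ) (hγ1 : γ < 1) (hμ : IsProb μ)
    (hp : ∀ s a, IsProb (p s a)) (hπ : ∀ s, IsProb (π s)) (s : S) :
    dState γ μ p π s = (1 - γ) * μ s + γ * ∑ s₀, ∑ a₀, p s₀ a₀ s * dSA γ μ p π s₀ a₀ := by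
  have hsum := summable_pow_mul_stateProb hγ0 hγ1 hμ hp hπ
  have hshift : ∑' t : ℕ, γ ^ (t + 1) * stateProb μ p π (t + 1) s =
      γ * ∑ s₀, ∑ a₀, p s₀ a₀ s * π s₀ a₀ * ∑' t : ℕ, γ ^ t * stateProb μ p π t s₀ := by
    have hterm : ∀ t, γ ^ (t + 1) * stateProb μ p π (t + 1) s =
        ∑ s₀, ∑ a₀, γ * (p s₀ a₀ s * π s₀ a₀) * (γ ^ t * stateProb μ p π t s₀) := fun t => by
      simp only [stateProb, Finset.mul_sum]
      exact Finset.sum_congr rfl fun _ _ => Finset.sum_congr rfl fun _ _ => by ring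
    simp only [hterm, Finset.mul_sum]
    rw [Summable.tsum_finsetSum fun s₀ _ => summable_sum fun a₀ _ => (hsum s₀).mul_left _]
    refine Finset.sum_congr rfl fun s₀ _ => ?_
    rw [Summable.tsum_finsetSum fun a₀ _ => (hsum s₀).mul_left _]
    simp only [tsum_mul_left, mul_assoc]
  rw [dState, (hsum s).tsum_eq_zero_add, hshift]
  simp only [stateProb, pow_zero, one_mul, mul_add, dSA, dState, Finset.mul_sum]
  congr 1
  exact Finset.sum_congr rfl fun _ _ => Finset.sum_congr rfl fun _ _ => by ring

end Occupancy

theorem sum_abs_dState_sub_le {S A : Type*} [Fintype S] [Fintype A] {γ : ℝ} (hγ0 : 0 ≤ γ)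
    (hγ1 : γ < 1) {μ : S → ℝ} (hμ : IsProb μ) {p₁ p₂ : S → A → S → ℝ}
    (hp₁ : ∀ s a, IsProb (p₁ s a)) (hp₂ : ∀ s a, IsProb (p₂ s a)) {π₁ π₂ : S → A → ℝ}
    (hπ₁ : ∀ s, IsProb (π₁ s)) (hπ₂ : ∀ s, IsProb (π₂ s)) :
    ∑ s, |dState γ μ p₁ π₁ s - dState γ μ p₂ π₂ s| ≤
      γ * ∑ s, ∑ a, (2 * (dSA γ μ p₁ π₁ s a * DTV (p₁ s a) (p₂ s a)) +
        |dSA γ μ p₁ π₁ s a - dSA γ μ p₂ π₂ s a|) := by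
  have hdiff : ∀ s, dState γ μ p₁ π₁ s - dState γ μ p₂ π₂ s = γ * ∑ x : S × A,
      (p₁ x.1 x.2 s * dSA γ μ p₁ π₁ x.1 x.2 - p₂ x.1 x.2 s * dSA γ μ p₂ π₂ x.1 x.2) := fun s => by
    rw [dState_bellman_flow hγ0 hγ1 hμ hp₁ hπ₁, dState_bellman_flow hγ0 hγ1 hμ hp₂ hπ₂]
    simp only [Fintype.sum_prod_type, Finset.sum_sub_distrib]
    ring
  calc ∑ s, |dState γ μ p₁ π₁ s - dState γ μ p₂ π₂ s|
      = γ * ∑ s, |∑ x : S × A,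
          (p₁ x.1 x.2 s * dSA γ μ p₁ π₁ x.1 x.2 - p₂ x.1 x.2 s * dSA γ μ p₂ π₂ x.1 x.2)| := by
        rw [Finset.mul_sum]
        exact Finset.sum_congr rfl fun s _ => by rw [hdiff, abs_mul, abs_of_nonneg hγ0]
    _ ≤ γ * ∑ x : S × A, (2 * (dSA γ μ p₁ π₁ x.1 x.2 * DTV (p₁ x.1 x.2) (p₂ x.1 x.2)) +
          |dSA γ μ p₁ π₁ x.1 x.2 - dSA γ μ p₂ π₂ x.1 x.2|) := by
        gcongr
        exact sum_abs_sum_mul_sub_mul_le (fun x => dSA_nonneg hγ0 hγ1 hμ hp₁ hπ₁ x.1 x.2)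
          fun x => hp₂ x.1 x.2
    _ = _ := by simp only [Fintype.sum_prod_type]

/-- Recursive inequality for the difference of discounted state-action distributions,
obtained via the Bellman flow constraint and the triangle inequality. -/
theorem discounted_distribution_recursive_inequality {S A : Type*} [Fintype S] [Fintype A]
    (γ : ℝ) (hγ0 : 0 ≤ γ) (hγ1 : γ < 1)
    (μ : S → ℝ) (hμ : IsProb μ)
    (p₁ p₂ : S → A → S → ℝ) (hp₁ : ∀ s a, IsProb (p₁ s a)) (hp₂ : ∀ s a, IsProb (p₂ s a))
    (π₁ π₂ : S → A → ℝ) (hπ₁ : ∀ s, IsProb (π₁ s)) (hπ₂ : ∀ s, IsProb (π₂ s))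
    (εm επ : ℝ)
    (hm : ∑ s : S, ∑ a : A, dSA γ μ p₁ π₁ s a * DTV (p₁ s a) (p₂ s a) ≤ εm)
    (hπ : ∑ s : S, dState γ μ p₁ π₁ s * DTV (π₁ s) (π₂ s) ≤ επ) :
    ∑ s : S, ∑ a : A, |dSA γ μ p₁ π₁ s a - dSA γ μ p₂ π₂ s a| ≤
      2 * γ * εm + 2 * επ +
        γ * ∑ s : S, ∑ a : A, |dSA γ μ p₁ π₁ s a - dSA γ μ p₂ π₂ s a| := by
  have hpolicy : ∑ s, ∑ a, |dSA γ μ p₁ π₁ s a - dSA γ μ p₂ π₂ s a| ≤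
      ∑ s, (2 * (dState γ μ p₁ π₁ s * DTV (π₁ s) (π₂ s)) +
        |dState γ μ p₁ π₁ s - dState γ μ p₂ π₂ s|) :=
    Finset.sum_le_sum fun s _ =>
      sum_abs_mul_sub_mul_le (dState_nonneg hγ0 hγ1 hμ hp₁ hπ₁ s) (hπ₂ s)
  have hdynamics := sum_abs_dState_sub_le hγ0 hγ1 hμ hp₁ hp₂ hπ₁ hπ₂
  simp only [Finset.sum_add_distrib, ← Finset.mul_sum] at hpolicy hdynamics
  linarith [mul_le_mul_of_nonneg_left hm hγ0]
end
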